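/- arXiv:1902.00340 — 3 statements merged into one kernel-verified Lean document; each statement's English description precedes it below -/
import Mathlib

section
/- Let {r_t}_{t≥0} be a sequence of nonnegative reals with r₀ = 0 satisfying r_{t+1} ≤ (1 - p/2) r_t + (2/p) η_t² A for all t ≥ 0, where p ∈ (0,1], A ≥ 0, and η_t = b/(t+a) with b > 0 and a ≥ 5/p. Then r_t ≤ 20 η_t² A / p² for all t ≥ 0. -/
/-- Recursion lemma: if r₀ = 0 and r_{t+1} ≤ (1-p/2) r_t + (2/p) η_t² A with
η_t = b/(t+a), a ≥ 5/p, then r_t ≤ 20 η_t² A / p². -/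
theorem stepsize_recursion_bound (p A a b : ℝ) (r : ℕ → ℝ)
    (hp : 0 < p) (hp1 : p ≤ 1) (hA : 0 ≤ A) (hb : 0 < b) (ha : 5 / p ≤ a)
    (hr0 : r 0 = 0) (hrnonneg : ∀ t, 0 ≤ r t)
    (hrec : ∀ t : ℕ, r (t + 1) ≤ (1 - p / 2) * r t + (2 / p) * (b / ((t : ℝ) + a)) ^ 2 * A) :
    ∀ t : ℕ, r t ≤ 20 * (b / ((t : ℝ) + a)) ^ 2 * A / p ^ 2 := by
  have ha0 : 0 < a := lt_of_lt_of_le (by positivity) ha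
  intro t
  induction t with
  | zero =>
    rw [hr0]
    have : ((0:ℕ):ℝ) + a = a := by push_cast; ring
    rw [this]; positivity
  | succ t ih =>
    have hs : (0:ℝ) < (t:ℝ) + a := by positivity
    have hs1 : (0:ℝ) < (t:ℝ) + a + 1 := by positivity
    have hps : 5 ≤ p * ((t:ℝ) + a) := by
      have h5 : (5:ℝ) = p * (5/p) := by field_simp
      have : p * (5/p) ≤ p * a := by nlinarith
      nlinarith [Nat.cast_nonneg (α := ℝ) t]
    have h1 : r (t+1) ≤ (1 - p/2) * (20 * (b / ((t:ℝ)+a))^2 * A / p^2)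
        + (2/p) * (b/((t:ℝ)+a))^2 * A := by
      refine le_trans (hrec t) ?_
      have hcoef : (0:ℝ) ≤ 1 - p/2 := by linarith
      nlinarith [hrnonneg t, ih]
    refine h1.trans ?_
    have hcast : ((t+1 : ℕ) : ℝ) + a = ((t:ℝ) + a) + 1 := by push_cast; ring
    rw [hcast]
    have key : (20 - 8*p) * (((t:ℝ)+a)+1)^2 ≤ 20 * ((t:ℝ)+a)^2 := by
      nlinarith [mul_pos hp hs, sq_nonneg ((t:ℝ)+a)]
    have key2 : A * b^2 * ((20 - 8*p) * (((t:ℝ)+a)+1)^2) ≤ A * b^2 * (20 * ((t:ℝ)+a)^2) :=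
      mul_le_mul_of_nonneg_left key (by positivity)
    have e1 : (1 - p/2) * (20 * (b / ((t:ℝ)+a))^2 * A / p^2) + (2/p) * (b/((t:ℝ)+a))^2 * A
        = A * b^2 * ((20 - 8*p) * (((t:ℝ)+a)+1)^2) / (p^2 * ((t:ℝ)+a)^2 * (((t:ℝ)+a)+1)^2) := by
      field_simp
      ring
    have e2 : 20 * (b / (((t:ℝ)+a)+1))^2 * A / p^2
        = A * b^2 * (20 * ((t:ℝ)+a)^2) / (p^2 * ((t:ℝ)+a)^2 * (((t:ℝ)+a)+1)^2) := by
      field_simp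
    rw [e1, e2]
    exact div_le_div_of_nonneg_right key2 (by positivity) |>.trans_eq rfl
end

section
/- Suppose nonnegative sequences {a_t} and {e_t} satisfy a_{t+1} ≤ (1 - μη_t)a_t - η_t A e_t + η_t² B + η_t³ C with η_t = 4/(μ(a+t)), constants A > 0, B, C ≥ 0, μ > 0, a > 1. Then with weights w_t = (a+t)² and S_T = ∑_{t=0}^{T-1} w_t, one has (A/S_T)∑_{t=0}^{T-1} w_t e_t ≤ (μa³/(4S_T)) a₀ + (2T(T+2a)/(μS_T)) B + (16T/(μ²S_T)) C. -/
set_option maxHeartbeats 800000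

private lemma sum_range_add_cast (a : ℝ) :
    ∀ T : ℕ, ∑ t ∈ Finset.range T, (a + (t : ℝ)) = T * a + T * (T - 1) / 2 := by
  intro T
  induction T with
  | zero => simp
  | succ n ihn =>
    rw [Finset.sum_range_succ, ihn]
    push_cast
    ring

/-- Weighted error bound for SGD-type recursions (Lemma of Stich 2018):
if a_{t+1} ≤ (1-μη_t)a_t - η_t A e_t + η_t² B + η_t³ C with η_t = 4/(μ(a+t)), then
(A/S_T)∑ w_t e_t ≤ μa³/(4S_T) a₀ + 2T(T+2a)/(μS_T) B + 16T/(μS_T) C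
with w_t = (a+t)², S_T = ∑_{t<T} w_t. -/
theorem weighted_sgd_recursion_bound (A B C μ a : ℝ) (aSeq eSeq : ℕ → ℝ)
    (hA : 0 < A) (hB : 0 ≤ B) (hC : 0 ≤ C) (hμ : 0 < μ) (ha : 1 < a)
    (haNonneg : ∀ t, 0 ≤ aSeq t) (heNonneg : ∀ t, 0 ≤ eSeq t)
    (hrec : ∀ t : ℕ,
      aSeq (t + 1) ≤ (1 - μ * (4 / (μ * (a + t)))) * aSeq t
        - (4 / (μ * (a + t))) * A * eSeq t
        + (4 / (μ * (a + t))) ^ 2 * B + (4 / (μ * (a + t))) ^ 3 * C) :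
    ∀ T : ℕ,
      (A / ∑ t ∈ Finset.range T, (a + (t : ℝ)) ^ 2)
          * ∑ t ∈ Finset.range T, (a + (t : ℝ)) ^ 2 * eSeq t
        ≤ (μ * a ^ 3 / (4 * ∑ t ∈ Finset.range T, (a + (t : ℝ)) ^ 2)) * aSeq 0
          + (2 * T * (T + 2 * a) / (μ * ∑ t ∈ Finset.range T, (a + (t : ℝ)) ^ 2)) * B
          + (16 * T / (μ ^ 2 * ∑ t ∈ Finset.range T, (a + (t : ℝ)) ^ 2)) * C := by
  have key : ∀ T : ℕ,
      A * (∑ t ∈ Finset.range T, (a + (t : ℝ)) ^ 2 * eSeq t)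
        + μ / 4 * (a + T - 1) ^ 3 * aSeq T
      ≤ μ / 4 * (a - 1) ^ 3 * aSeq 0
        + 4 / μ * (∑ t ∈ Finset.range T, (a + (t : ℝ))) * B
        + 16 / μ ^ 2 * T * C := by
    intro T
    induction T with
    | zero => simp
    | succ T ih =>
      rw [Finset.sum_range_succ, Finset.sum_range_succ]
      have hx : (0 : ℝ) < a + T := by
        have : (0:ℝ) ≤ (T:ℕ) := Nat.cast_nonneg T
        nlinarith
      have hμx : μ * (a + (T:ℝ)) ≠ 0 := by positivity
      have h' : aSeq (T+1) * (μ * (a+(T:ℝ)))^3 ≤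
          ((μ * (a+T) - μ*4) * aSeq T * (μ*(a+T))^2 - 4 * A * eSeq T * (μ*(a+T))^2
            + 4^2 * B * (μ*(a+T)) + 4^3 * C) := by
        have h2 := hrec T
        have := mul_le_mul_of_nonneg_right h2 (le_of_lt (by positivity : (0:ℝ) < (μ*(a+T))^3))
        calc aSeq (T+1) * (μ * (a+(T:ℝ)))^3 ≤ _ := this
          _ = _ := by field_simp
      have h'' : μ/4*(a+(T:ℝ))^3 * aSeq (T+1) ≤
          μ/4*(a+T)^2*(a+T-4)*aSeq T - A*(a+T)^2*eSeq T + 4*(a+T)/μ * B + 16/μ^2 * C := by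
        have := mul_le_mul_of_nonneg_right h' (le_of_lt (by positivity : (0:ℝ) < 1/(4*μ^2)))
        calc μ/4*(a+(T:ℝ))^3 * aSeq (T+1) = aSeq (T+1) * (μ * (a+(T:ℝ)))^3 * (1/(4*μ^2)) := by
              field_simp
          _ ≤ _ := this
          _ = _ := by field_simp; ring
      have hcube : μ/4*(a + (T:ℝ))^2 * (a + T - 4) * aSeq T ≤ μ/4*(a + T - 1)^3 * aSeq T := by
        have h1 : (a + (T:ℝ))^2 * (a + T - 4) ≤ (a + T - 1)^3 := by nlinarith
        have := mul_le_mul_of_nonneg_right h1 (haNonneg T)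
        nlinarith [this]
      push_cast
      have e0 : a + ((T:ℝ) + 1) - 1 = a + T := by ring
      rw [e0]
      set S1 := ∑ t ∈ Finset.range T, (a + (t:ℝ)) ^ 2 * eSeq t
      set S2 := ∑ t ∈ Finset.range T, (a + (t:ℝ))
      have e1 : 4 / μ * (S2 + (a + (T:ℝ))) * B = 4 / μ * S2 * B + 4 * (a + (T:ℝ)) / μ * B := by
        ring
      have e2 : 16 / μ ^ 2 * ((T:ℝ) + 1) * C = 16 / μ ^ 2 * (T:ℝ) * C + 16 / μ ^ 2 * C := by
        ring
      rw [e1, e2]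
      linarith [ih, h'', hcube]
  intro T
  rcases Nat.eq_zero_or_pos T with hT | hT
  · subst hT; simp
  -- denominators
  have hS : 0 < ∑ t ∈ Finset.range T, (a + (t : ℝ)) ^ 2 := by
    apply Finset.sum_pos
    · intro t _
      have : (0:ℝ) ≤ (t:ℕ) := Nat.cast_nonneg t
      positivity
    · exact ⟨0, Finset.mem_range.mpr hT⟩
  -- bound on the arithmetic sum
  have hsum : ∑ t ∈ Finset.range T, (a + (t : ℝ)) ≤ T * (T + 2*a) / 2 := by
    rw [sum_range_add_cast a T]
    have : (0:ℝ) ≤ (T:ℕ) := Nat.cast_nonneg T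
    nlinarith
  have hk := key T
  have hnum : A * (∑ t ∈ Finset.range T, (a + (t : ℝ)) ^ 2 * eSeq t)
      ≤ μ * a ^ 3 / 4 * aSeq 0 + 2 * T * (T + 2 * a) / μ * B + 16 * T / μ ^ 2 * C := by
    have h1 : μ / 4 * (a - 1) ^ 3 * aSeq 0 ≤ μ * a ^ 3 / 4 * aSeq 0 := by
      have : (a-1)^3 ≤ a^3 := by nlinarith
      have := mul_le_mul_of_nonneg_right this (haNonneg 0)
      nlinarith
    have h2 : 4 / μ * (∑ t ∈ Finset.range T, (a + (t : ℝ))) * B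
        ≤ 2 * T * (T + 2 * a) / μ * B := by
      have h4 : (0:ℝ) < 4 / μ := by positivity
      have := mul_le_mul_of_nonneg_right
        (mul_le_mul_of_nonneg_left hsum (le_of_lt h4)) hB
      calc 4 / μ * (∑ t ∈ Finset.range T, (a + (t : ℝ))) * B
          ≤ 4 / μ * ((T:ℝ) * (T + 2*a) / 2) * B := this
        _ = 2 * T * (T + 2 * a) / μ * B := by ring
    have h3 : (0:ℝ) ≤ μ / 4 * (a + T - 1) ^ 3 * aSeq T := by
      have hT0 : (0:ℝ) ≤ (T:ℝ) := Nat.cast_nonneg T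
      have h6 : (0:ℝ) ≤ a + (T:ℝ) - 1 := by linarith
      exact mul_nonneg (mul_nonneg (by positivity) (pow_nonneg h6 3)) (haNonneg T)
    have h5 : 16 / μ ^ 2 * (T:ℝ) * C = 16 * T / μ ^ 2 * C := by ring
    linarith [hk]
  -- divide by S_T
  have := (div_le_div_iff_of_pos_right hS).mpr hnum
  calc (A / ∑ t ∈ Finset.range T, (a + (t : ℝ)) ^ 2)
          * ∑ t ∈ Finset.range T, (a + (t : ℝ)) ^ 2 * eSeq t
      = (A * ∑ t ∈ Finset.range T, (a + (t : ℝ)) ^ 2 * eSeq t)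
          / ∑ t ∈ Finset.range T, (a + (t : ℝ)) ^ 2 := by ring
    _ ≤ (μ * a ^ 3 / 4 * aSeq 0 + 2 * T * (T + 2 * a) / μ * B + 16 * T / μ ^ 2 * C)
          / ∑ t ∈ Finset.range T, (a + (t : ℝ)) ^ 2 := this
    _ = (μ * a ^ 3 / (4 * ∑ t ∈ Finset.range T, (a + (t : ℝ)) ^ 2)) * aSeq 0
          + (2 * T * (T + 2 * a) / (μ * ∑ t ∈ Finset.range T, (a + (t : ℝ)) ^ 2)) * B
          + (16 * T / (μ ^ 2 * ∑ t ∈ Finset.range T, (a + (t : ℝ)) ^ 2)) * C := by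
        field_simp
end

section
/- Let W be symmetric doubly stochastic with spectral gap δ and β = ‖I - W‖₂. For X, X̂ ∈ ℝ^{d×n} with column average matrix X̄ = X(1/n)𝟙𝟙ᵀ, and X⁺ = X + γ X̂(W - I), for every α > 0: ‖X⁺ - X̄‖_F² ≤ (1-δγ)²(1+α)‖X - X̄‖_F² + γ²(1+α⁻¹)β²‖X̂ - X‖_F², provided 0 ≤ γ ≤ 1. -/
/-!
Since `X̄ W = X̄`, the error of the step splits as
`X⁺ - X̄ = (X - X̄) ((1 - γ) I + γ W) - γ (X̂ - X) (I - W)`, and the weighted Young inequality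
`‖a - b‖² ≤ (1 + α) ‖a‖² + (1 + α⁻¹) ‖b‖²` separates the two terms. The second is at most
`γ β ‖X̂ - X‖_F`. For the first, the Frobenius norm is the ℓ² sum of the row norms, the rows of
`X - X̄` are orthogonal to `𝟙`, and in an eigenbasis of `W` the matrix `(1 - γ) I + γ W` scales the
`i`-th coordinate by `1 - γ + γ λᵢ`, of absolute value at most `1 - δγ` whenever `|λᵢ| ≤ 1 - δ`.
That covers every eigenvalue except `λ_{i₀} = 1`: if `δ ≤ 0` it satisfies the same bound, and if
`δ > 0` it is simple, so its eigenvector is parallel to `𝟙` and the rows have no component along it.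
-/

/-- The spectral (ℓ₂ operator) norm of a real matrix. -/
noncomputable def specNorm {m n : ℕ} (M : Matrix (Fin m) (Fin n) ℝ) : ℝ :=
  ‖LinearMap.toContinuousLinearMap (Matrix.toEuclideanLin M)‖

/-- The Frobenius norm of a real matrix. -/
noncomputable def frobNorm {m n : ℕ} (M : Matrix (Fin m) (Fin n) ℝ) : ℝ :=
  Real.sqrt (∑ i, ∑ j, (M i j) ^ 2)

open Matrix WithLp
open scoped RealInnerProductSpace

attribute [local instance] Matrix.frobeniusNormedAddCommGroup Matrix.frobeniusNormedSpace

lemma norm_sub_sq_le_peter_paul {E : Type*} [SeminormedAddGroup E] {α : ℝ} (hα : 0 < α)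
    (a b : E) : ‖a - b‖ ^ 2 ≤ (1 + α) * ‖a‖ ^ 2 + (1 + α⁻¹) * ‖b‖ ^ 2 := by
  have hgap : (1 + α) * ‖a‖ ^ 2 + (1 + α⁻¹) * ‖b‖ ^ 2 - (‖a‖ + ‖b‖) ^ 2
      = (α * ‖a‖ - ‖b‖) ^ 2 / α := by
    field_simp
    ring
  calc ‖a - b‖ ^ 2 ≤ (‖a‖ + ‖b‖) ^ 2 := by gcongr; exact norm_sub_le a b
    _ ≤ _ := by linarith [div_nonneg (sq_nonneg (α * ‖a‖ - ‖b‖)) hα.le]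

lemma sq_one_sub_add_mul_le {γ δ l : ℝ} (hγ0 : 0 ≤ γ) (hγ1 : γ ≤ 1) (hl : |l| ≤ 1 - δ) :
    (1 - γ + γ * l) ^ 2 ≤ (1 - δ * γ) ^ 2 := by
  have habs : |1 - γ + γ * l| ≤ 1 - δ * γ :=
    calc |1 - γ + γ * l| ≤ |1 - γ| + |γ * l| := abs_add_le _ _
      _ = 1 - γ + γ * |l| := by rw [abs_of_nonneg (by linarith), abs_mul, abs_of_nonneg hγ0]
      _ ≤ 1 - γ + γ * (1 - δ) := by gcongr
      _ = 1 - δ * γ := by ring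
  exact sq_le_sq' (abs_le.mp habs).1 (abs_le.mp habs).2

namespace Matrix.IsHermitian

variable {ι : Type*} [Fintype ι] [DecidableEq ι] {A : Matrix ι ι ℝ} (hA : A.IsHermitian)

lemma eigenvectorBasis_repr_toEuclideanLin (x : EuclideanSpace ℝ ι) (i : ι) :
    hA.eigenvectorBasis.repr (toEuclideanLin A x) i
      = hA.eigenvalues i * hA.eigenvectorBasis.repr x i := by
  have hev : toEuclideanLin A (hA.eigenvectorBasis i)
      = hA.eigenvalues i • hA.eigenvectorBasis i := by
    ext1
    simp [toLpLin_apply, hA.mulVec_eigenvectorBasis]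
  rw [OrthonormalBasis.repr_apply_apply, OrthonormalBasis.repr_apply_apply,
    ← isSymmetric_toEuclideanLin_iff.mpr hA, hev, real_inner_smul_left]

lemma norm_smul_add_smul_toEuclideanLin_sq_le {a b K : ℝ} {x : EuclideanSpace ℝ ι}
    (h : ∀ i, hA.eigenvectorBasis.repr x i ≠ 0 → (a + b * hA.eigenvalues i) ^ 2 ≤ K) :
    ‖a • x + b • toEuclideanLin A x‖ ^ 2 ≤ K * ‖x‖ ^ 2 := by
  rw [← hA.eigenvectorBasis.repr.norm_map, ← hA.eigenvectorBasis.repr.norm_map x,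
    EuclideanSpace.norm_sq_eq, EuclideanSpace.norm_sq_eq, Finset.mul_sum]
  refine Finset.sum_le_sum fun i _ => ?_
  simp only [map_add, map_smul, PiLp.add_apply, PiLp.smul_apply, smul_eq_mul,
    hA.eigenvectorBasis_repr_toEuclideanLin, Real.norm_eq_abs, sq_abs]
  set c := hA.eigenvectorBasis.repr x
  by_cases hi : c i = 0
  · simp [hi]
  · calc (a * c i + b * (hA.eigenvalues i * c i)) ^ 2
        = (a + b * hA.eigenvalues i) ^ 2 * c i ^ 2 := by ring
      _ ≤ K * c i ^ 2 := by gcongr; exact h i hi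

lemma eigenvectorBasis_repr_eq_zero_of_inner_eq_zero {u x : EuclideanSpace ℝ ι} {μ : ℝ}
    {i₀ : ι} (hu : toEuclideanLin A u = μ • u) (hu0 : u ≠ 0)
    (hsimple : ∀ j ≠ i₀, hA.eigenvalues j ≠ μ) (hx : ⟪u, x⟫ = 0) :
    hA.eigenvectorBasis.repr x i₀ = 0 := by
  set b := hA.eigenvectorBasis
  have hsupp : ∀ j ≠ i₀, b.repr u j = 0 := fun j hj => by
    have := hA.eigenvectorBasis_repr_toEuclideanLin u j
    rw [hu, map_smul, PiLp.smul_apply, smul_eq_mul] at this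
    by_contra h
    exact hsimple j hj (mul_right_cancel₀ h this.symm)
  have hpair : b.repr u i₀ * b.repr x i₀ = 0 := by
    rw [← hx, ← b.sum_inner_mul_inner, Finset.sum_eq_single i₀ (fun j _ hj => ?_) (by simp),
      b.repr_apply_apply, b.repr_apply_apply, real_inner_comm]
    rw [real_inner_comm, ← b.repr_apply_apply, hsupp j hj, zero_mul]
  refine (mul_eq_zero.mp hpair).resolve_left fun h => hu0 ?_
  rw [← b.sum_repr u, Finset.sum_eq_zero fun j _ => ?_]
  rw [show b.repr u j = 0 from if hj : j = i₀ then hj ▸ h else hsupp j hj, zero_smul]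

end Matrix.IsHermitian

section

variable {ι : Type*} [Fintype ι]

lemma frobenius_norm_sq_eq_sum {κ : Type*} [Fintype κ] (M : Matrix κ ι ℝ) :
    ‖M‖ ^ 2 = ∑ i, ‖toLp 2 (M i)‖ ^ 2 :=
  PiLp.norm_sq_eq_of_L2 _ (toLp 2 fun i => toLp 2 (M i))

lemma inner_one_toLp_row_sub_mul_eq_zero {κ : Type*} {X : Matrix κ ι ℝ} {J : Matrix ι ι ℝ}
    (hJ : J *ᵥ 1 = 1) (i : κ) : ⟪toLp 2 1, toLp 2 ((X - X * J) i)⟫ = 0 := by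
  have : (X - X * J) *ᵥ 1 = 0 := by rw [sub_mulVec, ← mulVec_mulVec, hJ, sub_self]
  rw [EuclideanSpace.inner_toLp_toLp, star_one]
  exact congrFun this i

lemma ones_mul_eq_ones {κ R : Type*} [CommRing R] {W : Matrix ι ι R} (hcol : 1 ᵥ* W = 1) :
    (of fun _ _ => 1 : Matrix κ ι R) * W = of fun _ _ => 1 := by
  ext i j
  simpa [mul_apply, vecMul, dotProduct] using congrFun hcol j

variable [DecidableEq ι]

lemma norm_lazy_toEuclideanLin_sq_le {W : Matrix ι ι ℝ} (hW : W.IsHermitian)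
    (hrow : W *ᵥ 1 = 1) {δ : ℝ} {i₀ : ι} (h1 : hW.eigenvalues i₀ = 1)
    (h2 : ∀ i, i ≠ i₀ → |hW.eigenvalues i| ≤ 1 - δ) {γ : ℝ} (hγ0 : 0 ≤ γ) (hγ1 : γ ≤ 1)
    {x : EuclideanSpace ℝ ι} (hx : ⟪toLp 2 1, x⟫ = 0) :
    ‖toEuclideanLin ((1 - γ) • 1 + γ • W) x‖ ^ 2 ≤ (1 - δ * γ) ^ 2 * ‖x‖ ^ 2 := by
  have hspec : ∀ i, hW.eigenvectorBasis.repr x i ≠ 0 → |hW.eigenvalues i| ≤ 1 - δ := by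
    intro i hi
    by_cases hii : i = i₀
    · subst hii
      rw [h1, abs_one]
      by_contra! hδ
      refine hi (hW.eigenvectorBasis_repr_eq_zero_of_inner_eq_zero (μ := 1) ?_ ?_ ?_ hx)
      · simp [toLpLin_toLp, hrow]
      · exact fun h => one_ne_zero (congrFun (congrArg ofLp h) i)
      · intro j hj h
        have := h2 j hj
        rw [h, abs_one] at this
        linarith
    · exact h2 i hii
  simpa [add_smul, map_add, map_smul] using
    hW.norm_smul_add_smul_toEuclideanLin_sq_le fun i hi =>
      sq_one_sub_add_mul_le hγ0 hγ1 (hspec i hi)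

lemma toLp_mul_row_of_isSymm {κ : Type*} {A : Matrix κ ι ℝ} {M : Matrix ι ι ℝ} (hM : M.IsSymm)
    (i : κ) : toLp 2 ((A * M) i) = toEuclideanLin M (toLp 2 (A i)) := by
  rw [toLpLin_toLp, toLin'_apply, ← vecMul_transpose, hM.eq]
  rfl

lemma frobenius_norm_mul_sq_le {κ : Type*} [Fintype κ] {K : ℝ} {A : Matrix κ ι ℝ}
    {M : Matrix ι ι ℝ} (hM : M.IsSymm)
    (h : ∀ i, ‖toEuclideanLin M (toLp 2 (A i))‖ ^ 2 ≤ K * ‖toLp 2 (A i)‖ ^ 2) :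
    ‖A * M‖ ^ 2 ≤ K * ‖A‖ ^ 2 := by
  rw [frobenius_norm_sq_eq_sum, frobenius_norm_sq_eq_sum, Finset.mul_sum]
  exact Finset.sum_le_sum fun i _ => toLp_mul_row_of_isSymm hM i ▸ h i

lemma gossip_step_sub_eq {κ R : Type*} [CommRing R] (X Xh : Matrix κ ι R) {W J : Matrix ι ι R}
    (γ : R) (hJW : J * W = J) :
    X + γ • (Xh * (W - 1)) - X * J
      = (X - X * J) * ((1 - γ) • 1 + γ • W) - γ • ((Xh - X) * (1 - W)) := by
  simp only [Matrix.mul_sub, Matrix.sub_mul, Matrix.mul_add, Matrix.mul_smul, Matrix.mul_one,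
    Matrix.mul_assoc, hJW]
  module

end

lemma inv_card_smul_ones_mulVec_one {n : ℕ} (hn : n ≠ 0) :
    ((n : ℝ)⁻¹ • of fun _ _ => (1 : ℝ) : Matrix (Fin n) (Fin n) ℝ) *ᵥ 1 = 1 := by
  ext i
  simp [mulVec, dotProduct, hn]

lemma frobNorm_eq_norm {m n : ℕ} (M : Matrix (Fin m) (Fin n) ℝ) : frobNorm M = ‖M‖ := by
  rw [frobNorm, frobenius_norm_def, Real.sqrt_eq_rpow]
  simp

theorem gossip_step_descent_general {d n : ℕ} (W : Matrix (Fin n) (Fin n) ℝ)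
    (hH : W.IsHermitian)
    (hrow : W.mulVec 1 = 1)
    (δ : ℝ) (i₀ : Fin n) (h1 : hH.eigenvalues i₀ = 1)
    (h2 : ∀ i, i ≠ i₀ → |hH.eigenvalues i| ≤ 1 - δ)
    (γ α : ℝ) (hγ0 : 0 ≤ γ) (hγ1 : γ ≤ 1) (hα : 0 < α)
    (X Xh : Matrix (Fin d) (Fin n) ℝ) :
    frobNorm (X + γ • (Xh * (W - 1))
        - X * ((n : ℝ)⁻¹ • Matrix.of (fun _ _ => (1 : ℝ)))) ^ 2
      ≤ (1 - δ * γ) ^ 2 * (1 + α)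
          * frobNorm (X - X * ((n : ℝ)⁻¹ • Matrix.of (fun _ _ => (1 : ℝ)))) ^ 2
        + γ ^ 2 * (1 + α⁻¹) * specNorm (1 - W) ^ 2 * frobNorm (Xh - X) ^ 2 := by
  set J : Matrix (Fin n) (Fin n) ℝ := (n : ℝ)⁻¹ • of fun _ _ => 1
  -- Restated: the statement's `X * J` elaborates through `CStarMatrix`'s multiplication,
  -- which `rw` does not see through.
  suffices ‖X + γ • (Xh * (W - 1)) - X * J‖ ^ 2
      ≤ (1 - δ * γ) ^ 2 * (1 + α) * ‖X - X * J‖ ^ 2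
        + γ ^ 2 * (1 + α⁻¹) * specNorm (1 - W) ^ 2 * ‖Xh - X‖ ^ 2 by
    simp only [frobNorm_eq_norm]
    exact this
  have hW : W.IsSymm := isHermitian_iff_isSymm.mp hH
  have hJW : J * W = J := by
    rw [smul_mul, ones_mul_eq_ones (by rw [← mulVec_transpose, hW.eq, hrow])]
  have hmix : ‖(X - X * J) * ((1 - γ) • 1 + γ • W)‖ ^ 2 ≤ (1 - δ * γ) ^ 2 * ‖X - X * J‖ ^ 2 :=
    frobenius_norm_mul_sq_le ((isSymm_one.smul _).add (hW.smul _)) fun i =>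
      norm_lazy_toEuclideanLin_sq_le hH hrow h1 h2 hγ0 hγ1 <|
        inner_one_toLp_row_sub_mul_eq_zero (inv_card_smul_ones_mulVec_one i₀.pos.ne') i
  have hdev : ‖(Xh - X) * (1 - W)‖ ^ 2 ≤ specNorm (1 - W) ^ 2 * ‖Xh - X‖ ^ 2 :=
    frobenius_norm_mul_sq_le (isSymm_one.sub hW) fun i => by
      rw [← mul_pow]
      gcongr
      exact (LinearMap.toContinuousLinearMap (toEuclideanLin (1 - W))).le_opNorm _
  rw [gossip_step_sub_eq X Xh γ hJW]
  calc _ ≤ (1 + α) * ‖(X - X * J) * ((1 - γ) • 1 + γ • W)‖ ^ 2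
        + (1 + α⁻¹) * ‖γ • ((Xh - X) * (1 - W))‖ ^ 2 := norm_sub_sq_le_peter_paul hα _ _
    _ ≤ (1 + α) * ((1 - δ * γ) ^ 2 * ‖X - X * J‖ ^ 2)
        + (1 + α⁻¹) * (γ ^ 2 * (specNorm (1 - W) ^ 2 * ‖Xh - X‖ ^ 2)) := by
      rw [norm_smul, mul_pow, Real.norm_eq_abs, sq_abs]
      gcongr
    _ = _ := by ring

/-- Descent lemma for the gossip step: with W symmetric doubly stochastic with spectral
gap δ (eigenvalue 1 at index i₀, all others of absolute value ≤ 1 - δ),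
β = ‖I - W‖₂, X̄ = X(1/n)𝟙𝟙ᵀ and X⁺ = X + γ X̂(W - I), for every α > 0 and 0 ≤ γ ≤ 1:
‖X⁺ - X̄‖_F² ≤ (1-δγ)²(1+α)‖X - X̄‖_F² + γ²(1+α⁻¹)β²‖X̂ - X‖_F². -/
theorem gossip_step_descent {d n : ℕ} (W : Matrix (Fin n) (Fin n) ℝ)
    (hH : W.IsHermitian)
    (hrow : W.mulVec 1 = 1) (hcol : Matrix.vecMul 1 W = 1)
    (δ : ℝ) (i₀ : Fin n) (h1 : hH.eigenvalues i₀ = 1)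
    (h2 : ∀ i, i ≠ i₀ → |hH.eigenvalues i| ≤ 1 - δ)
    (γ α : ℝ) (hγ0 : 0 ≤ γ) (hγ1 : γ ≤ 1) (hα : 0 < α)
    (X Xh : Matrix (Fin d) (Fin n) ℝ) :
    frobNorm (X + γ • (Xh * (W - 1))
        - X * ((n : ℝ)⁻¹ • Matrix.of (fun _ _ => (1 : ℝ)))) ^ 2
      ≤ (1 - δ * γ) ^ 2 * (1 + α)
          * frobNorm (X - X * ((n : ℝ)⁻¹ • Matrix.of (fun _ _ => (1 : ℝ)))) ^ 2
        + γ ^ 2 * (1 + α⁻¹) * specNorm (1 - W) ^ 2 * frobNorm (Xh - X) ^ 2 :=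
  gossip_step_descent_general W hH hrow δ i₀ h1 h2 γ α hγ0 hγ1 hα X Xh
end
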